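/- arXiv:1904.06766 — 6 statements merged into one kernel-verified Lean document; each statement's English description precedes it below -/
import Mathlib

section
/- Let X and Y be standard Borel spaces, and equip X ⊕ Y with the sum measurable space structure. Then the map from Multiset (X ⊕ Y) to Multiset X × Multiset Y sending a finite multiset D to the pair consisting of the multiset of its left components and the multiset of its right components (i.e. D ↦ (D.filterMap Sum.getLeft?, D.filterMap Sum.getRight?)) is measurable with respect to the counting σ-algebra on Multiset (X ⊕ Y) and the product of the counting σ-algebras on Multiset X and Multiset Y; moreover it is a bijection whose inverse (D₁, D₂) ↦ D₁.map Sum.inl + D₂.map Sum.inr is also measurable. -/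
/- `countIn D E` is the number of elements of the finite multiset `D` lying in the set `E`,
counted with multiplicity. -/
open Classical in
noncomputable def countIn {X : Type*} (D : Multiset X) (E : Set X) : ℕ :=
  (D.filter (· ∈ E)).card

/-- The counting σ-algebra on the space of finite multisets over a measurable space `X`:
generated by the counting events `C(E,n) = {D | countIn D E = n}` for `E` measurable, `n : ℕ`. -/
def countingMS (X : Type*) [MeasurableSpace X] : MeasurableSpace (Multiset X) :=
  MeasurableSpace.generateFrom
    {C : Set (Multiset X) |
      ∃ (E : Set X) (n : ℕ), MeasurableSet E ∧ C = {D : Multiset X | countIn D E = n}}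

open Classical in
lemma countIn_cons {X : Type*} (a : X) (D : Multiset X) (E : Set X) :
    countIn (a ::ₘ D) E = (if a ∈ E then 1 else 0) + countIn D E := by
  simp only [countIn, Multiset.filter_cons]
  split <;> simp [Nat.add_comm]

lemma countIn_add {X : Type*} (D₁ D₂ : Multiset X) (E : Set X) :
    countIn (D₁ + D₂) E = countIn D₁ E + countIn D₂ E := by
  simp [countIn, Multiset.filter_add]

lemma countIn_map {A B : Type*} (f : A → B) (D : Multiset A) (E : Set B) :
    countIn (D.map f) E = countIn D (f ⁻¹' E) := by
  induction D using Multiset.induction with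
  | empty => simp [countIn]
  | cons a D ih =>
    by_cases h : f a ∈ E <;>
      simp [countIn_cons, ih, Set.mem_preimage, h]

lemma countIn_filterMap_left {X Y : Type*} (D : Multiset (X ⊕ Y)) (E : Set X) :
    countIn (D.filterMap Sum.getLeft?) E = countIn D (Sum.inl '' E) := by
  induction D using Multiset.induction with
  | empty => simp [countIn]
  | cons a D ih =>
    cases a with
    | inl x =>
      rw [Multiset.filterMap_cons_some _ _ _ (rfl : Sum.getLeft? (Sum.inl x) = some x)]
      by_cases h : x ∈ E <;>
        simp [countIn_cons, ih, h, Set.mem_image]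
    | inr y =>
      rw [Multiset.filterMap_cons_none _ _ (rfl : Sum.getLeft? (Sum.inr y) = none)]
      simp [countIn_cons, ih, Set.mem_image]

lemma countIn_filterMap_right {X Y : Type*} (D : Multiset (X ⊕ Y)) (E : Set Y) :
    countIn (D.filterMap Sum.getRight?) E = countIn D (Sum.inr '' E) := by
  induction D using Multiset.induction with
  | empty => simp [countIn]
  | cons a D ih =>
    cases a with
    | inl x =>
      rw [Multiset.filterMap_cons_none _ _ (rfl : Sum.getRight? (Sum.inl x) = none)]
      simp [countIn_cons, ih, Set.mem_image]
    | inr y =>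
      rw [Multiset.filterMap_cons_some _ _ _ (rfl : Sum.getRight? (Sum.inr y) = some y)]
      by_cases h : y ∈ E <;>
        simp [countIn_cons, ih, h, Set.mem_image]

lemma filterMap_add' {A B : Type*} (f : A → Option B) (s t : Multiset A) :
    (s + t).filterMap f = s.filterMap f + t.filterMap f := by
  induction s using Multiset.induction with
  | empty => simp
  | cons a s ih =>
    rw [Multiset.cons_add]
    cases h : f a with
    | none => rw [Multiset.filterMap_cons_none _ _ h, Multiset.filterMap_cons_none _ _ h, ih]
    | some b =>
      rw [Multiset.filterMap_cons_some _ _ _ h, Multiset.filterMap_cons_some _ _ _ h, ih,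
        Multiset.cons_add]

lemma split_left_inverse {X Y : Type*} (D : Multiset (X ⊕ Y)) :
    (D.filterMap Sum.getLeft?).map Sum.inl + (D.filterMap Sum.getRight?).map Sum.inr = D := by
  induction D using Multiset.induction with
  | empty => simp
  | cons a D ih =>
    cases a with
    | inl x =>
      rw [Multiset.filterMap_cons_some _ _ _ (rfl : Sum.getLeft? (Sum.inl x) = some x),
        Multiset.filterMap_cons_none _ _ (rfl : Sum.getRight? (Sum.inl x) = none),
        Multiset.map_cons, Multiset.cons_add, ih]
    | inr y =>
      rw [Multiset.filterMap_cons_none _ _ (rfl : Sum.getLeft? (Sum.inr y) = none),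
        Multiset.filterMap_cons_some _ _ _ (rfl : Sum.getRight? (Sum.inr y) = some y),
        Multiset.map_cons, Multiset.add_cons, ih]

lemma filterMap_none' {A B : Type*} (s : Multiset A) :
    s.filterMap (fun _ => (none : Option B)) = 0 := by
  induction s using Multiset.induction with
  | empty => simp
  | cons a s ih => rw [Multiset.filterMap_cons_none _ _ rfl, ih]

lemma split_right_inverse {X Y : Type*} (p : Multiset X × Multiset Y) :
    ((p.1.map Sum.inl + p.2.map Sum.inr).filterMap Sum.getLeft? = p.1) ∧
    ((p.1.map Sum.inl + p.2.map Sum.inr).filterMap Sum.getRight? = p.2) := by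
  have h1 : (Sum.getLeft? ∘ (Sum.inl : X → X ⊕ Y)) = some := rfl
  have h2 : (Sum.getLeft? ∘ (Sum.inr : Y → X ⊕ Y)) = fun _ => none := rfl
  have h3 : (Sum.getRight? ∘ (Sum.inl : X → X ⊕ Y)) = fun _ => none := rfl
  have h4 : (Sum.getRight? ∘ (Sum.inr : Y → X ⊕ Y)) = some := rfl
  constructor
  · rw [filterMap_add', Multiset.filterMap_map, Multiset.filterMap_map, h1, h2,
      Multiset.filterMap_some, filterMap_none', add_zero]
  · rw [filterMap_add', Multiset.filterMap_map, Multiset.filterMap_map, h3, h4,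
      Multiset.filterMap_some, filterMap_none', zero_add]

lemma measurable_countIn {X : Type*} [MeasurableSpace X] {E : Set X} (hE : MeasurableSet E) :
    @Measurable (Multiset X) ℕ (countingMS X) _ (fun D => countIn D E) := by
  letI : MeasurableSpace (Multiset X) := countingMS X
  apply measurable_to_countable'
  intro n
  have h : (fun D : Multiset X => countIn D E) ⁻¹' {n} = {D : Multiset X | countIn D E = n} := by
    ext D; simp
  rw [h]
  exact MeasurableSpace.measurableSet_generateFrom ⟨E, n, hE, rfl⟩

theorem multiset_sum_split_measurable_bijective
    {X Y : Type*} [MeasurableSpace X] [StandardBorelSpace X]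
    [MeasurableSpace Y] [StandardBorelSpace Y] :
    @Measurable _ _ (countingMS (X ⊕ Y)) ((countingMS X).prod (countingMS Y))
      (fun D : Multiset (X ⊕ Y) => (D.filterMap Sum.getLeft?, D.filterMap Sum.getRight?)) ∧
    Function.Bijective
      (fun D : Multiset (X ⊕ Y) => (D.filterMap Sum.getLeft?, D.filterMap Sum.getRight?)) ∧
    Function.LeftInverse
      (fun p : Multiset X × Multiset Y => p.1.map Sum.inl + p.2.map Sum.inr)
      (fun D : Multiset (X ⊕ Y) => (D.filterMap Sum.getLeft?, D.filterMap Sum.getRight?)) ∧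
    Function.RightInverse
      (fun p : Multiset X × Multiset Y => p.1.map Sum.inl + p.2.map Sum.inr)
      (fun D : Multiset (X ⊕ Y) => (D.filterMap Sum.getLeft?, D.filterMap Sum.getRight?)) ∧
    @Measurable _ _ ((countingMS X).prod (countingMS Y)) (countingMS (X ⊕ Y))
      (fun p : Multiset X × Multiset Y => p.1.map Sum.inl + p.2.map Sum.inr) := by
  letI mX : MeasurableSpace (Multiset X) := countingMS X
  letI mY : MeasurableSpace (Multiset Y) := countingMS Y
  letI mXY : MeasurableSpace (Multiset (X ⊕ Y)) := countingMS (X ⊕ Y)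
  have hleft : Function.LeftInverse
      (fun p : Multiset X × Multiset Y => p.1.map Sum.inl + p.2.map Sum.inr)
      (fun D : Multiset (X ⊕ Y) => (D.filterMap Sum.getLeft?, D.filterMap Sum.getRight?)) :=
    fun D => split_left_inverse D
  have hright : Function.RightInverse
      (fun p : Multiset X × Multiset Y => p.1.map Sum.inl + p.2.map Sum.inr)
      (fun D : Multiset (X ⊕ Y) => (D.filterMap Sum.getLeft?, D.filterMap Sum.getRight?)) := by
    intro p
    have h := split_right_inverse p
    simp only [Prod.ext_iff]
    exact ⟨h.1, h.2⟩
  have hfwd : @Measurable _ _ (countingMS (X ⊕ Y)) ((countingMS X).prod (countingMS Y))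
      (fun D : Multiset (X ⊕ Y) => (D.filterMap Sum.getLeft?, D.filterMap Sum.getRight?)) := by
    refine Measurable.prod ?_ ?_
    · apply measurable_generateFrom
      rintro t ⟨E, n, hE, rfl⟩
      have h : (fun D : Multiset (X ⊕ Y) => D.filterMap Sum.getLeft?) ⁻¹'
          {D : Multiset X | countIn D E = n}
          = {D : Multiset (X ⊕ Y) | countIn D (Sum.inl '' E) = n} := by
        ext D; simp [countIn_filterMap_left]
      rw [h]
      exact MeasurableSpace.measurableSet_generateFrom
        ⟨Sum.inl '' E, n, hE.inl_image, rfl⟩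
    · apply measurable_generateFrom
      rintro t ⟨E, n, hE, rfl⟩
      have h : (fun D : Multiset (X ⊕ Y) => D.filterMap Sum.getRight?) ⁻¹'
          {D : Multiset Y | countIn D E = n}
          = {D : Multiset (X ⊕ Y) | countIn D (Sum.inr '' E) = n} := by
        ext D; simp [countIn_filterMap_right]
      rw [h]
      exact MeasurableSpace.measurableSet_generateFrom
        ⟨Sum.inr '' E, n, measurableSet_inr_image.mpr hE, rfl⟩
  have hbwd : @Measurable _ _ ((countingMS X).prod (countingMS Y)) (countingMS (X ⊕ Y))
      (fun p : Multiset X × Multiset Y => p.1.map Sum.inl + p.2.map Sum.inr) := by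
    apply measurable_generateFrom
    rintro t ⟨E, n, hE, rfl⟩
    have h : (fun p : Multiset X × Multiset Y => p.1.map Sum.inl + p.2.map Sum.inr) ⁻¹'
        {D : Multiset (X ⊕ Y) | countIn D E = n}
        = (fun p : Multiset X × Multiset Y =>
            countIn p.1 (Sum.inl ⁻¹' E) + countIn p.2 (Sum.inr ⁻¹' E)) ⁻¹' {n} := by
      ext p
      simp [countIn_add, countIn_map]
    rw [h]
    exact (((measurable_countIn (measurable_inl hE)).comp measurable_fst).add
      ((measurable_countIn (measurable_inr hE)).comp measurable_snd)) (measurableSet_singleton n)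
  refine ⟨hfwd, ⟨hleft.injective, hright.surjective⟩, hleft, hright, hbwd⟩
end

section
/- Let X be a standard Borel space and let B ⊆ X be a measurable set. The selection map D ↦ D.filter (· ∈ B) (sending a finite multiset D to the multiset of its elements, with multiplicity, that lie in B) from Multiset X to Multiset X is measurable with respect to the counting σ-algebra on both sides. -/
open Classical in
lemma countIn_filter {X : Type*} (D : Multiset X) (B E : Set X) :
    countIn (D.filter (· ∈ B)) E = countIn D (E ∩ B) := by
  unfold countIn
  rw [Multiset.filter_filter]
  exact congrArg Multiset.card
    (@Multiset.filter_congr X _ _ _ (fun a => propDecidable _) D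
      (fun a _ => by simp [Set.mem_inter_iff]))

open Classical in
theorem selection_measurable {X : Type*} [MeasurableSpace X] [StandardBorelSpace X]
    (B : Set X) (hB : MeasurableSet B) :
    @Measurable _ _ (countingMS X) (countingMS X)
      (fun D : Multiset X => D.filter (· ∈ B)) := by
  letI : MeasurableSpace (Multiset X) := countingMS X
  show Measurable _
  unfold countingMS
  apply measurable_generateFrom
  rintro C ⟨E, n, hE, rfl⟩
  have : (fun D : Multiset X => D.filter (· ∈ B)) ⁻¹' {D | countIn D E = n}
      = {D : Multiset X | countIn D (E ∩ B) = n} := by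
    ext D
    simp [Set.preimage, countIn_filter]
  rw [this]
  exact MeasurableSpace.measurableSet_generateFrom ⟨E ∩ B, n, hE.inter hB, rfl⟩
end

section
/- Let X be a Polish space equipped with a complete metric d inducing its topology, with its Borel σ-algebra, and let k be a positive integer. Then the set of k-coarse finite multisets, i.e. the set of D ∈ Multiset X such that any two distinct elements x ≠ y occurring in D satisfy d(x,y) ≥ 1/k, is measurable with respect to the counting σ-algebra on Multiset X. -/
lemma countIn_eq_zero_iff {X : Type*} (D : Multiset X) (E : Set X) :
    countIn D E = 0 ↔ ∀ x ∈ D, x ∉ E := by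
  classical
  simp [countIn, Multiset.card_eq_zero, Multiset.filter_eq_nil]

open MeasureTheory in
theorem kCoarse_measurable {X : Type*} [MetricSpace X] [CompleteSpace X]
    [TopologicalSpace.SeparableSpace X] [MeasurableSpace X] [BorelSpace X]
    (k : ℕ) (hk : 0 < k) :
    MeasurableSet[countingMS X]
      {D : Multiset X | ∀ x ∈ D, ∀ y ∈ D, x ≠ y → (1 : ℝ) / k ≤ dist x y} := by
  obtain ⟨s, hsc, hsd⟩ := TopologicalSpace.exists_countable_dense X
  have hgen : ∀ (E : Set X), MeasurableSet E →
      MeasurableSet[countingMS X] {D : Multiset X | countIn D E = 0} := fun E hE =>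
    MeasurableSpace.measurableSet_generateFrom ⟨E, 0, hE, rfl⟩
  have key : {D : Multiset X | ∀ x ∈ D, ∀ y ∈ D, x ≠ y → (1 : ℝ) / k ≤ dist x y} =
      (⋃ x1 ∈ s, ⋃ x2 ∈ s, ⋃ r : ℚ,
        ⋃ (_ : 0 < (r : ℝ) ∧ 2 * (r : ℝ) ≤ dist x1 x2 ∧
            dist x1 x2 + 2 * (r : ℝ) < 1 / k),
        ({D : Multiset X | countIn D (Metric.ball x1 r) = 0}ᶜ ∩
         {D : Multiset X | countIn D (Metric.ball x2 r) = 0}ᶜ)) ᶜ := by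
    ext D
    simp only [Set.mem_compl_iff, Set.mem_iUnion, Set.mem_inter_iff, Set.mem_setOf_eq,
      not_exists]
    constructor
    · intro hD x1 hx1 x2 hx2 r
      rintro ⟨hr0, hsep, hlt⟩ ⟨h1, h2⟩
      rw [countIn_eq_zero_iff] at h1 h2
      push_neg at h1 h2
      obtain ⟨x, hxD, hx⟩ := h1
      obtain ⟨y, hyD, hy⟩ := h2
      rw [Metric.mem_ball] at hx hy
      have hxy : x ≠ y := by
        rintro rfl
        have : dist x1 x2 ≤ dist x1 x + dist x x2 := dist_triangle _ _ _
        rw [dist_comm x1 x] at this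
        linarith
      have hd : dist x y < 1 / k := by
        have h1 : dist x y ≤ dist x x1 + dist x1 x2 + dist x2 y :=
          dist_triangle4 _ _ _ _
        rw [dist_comm x2 y] at h1
        linarith
      exact absurd (hD x hxD y hyD hxy) (by linarith)
    · intro h x hxD y hyD hxy
      by_contra hd
      push_neg at hd
      set δ := dist x y with hδ
      have hδ0 : 0 < δ := dist_pos.mpr hxy
      obtain ⟨r, hr0, hrlt⟩ := exists_rat_btwn (show (0:ℝ) < min (δ/4) ((1/k - δ)/4) by
        have : 0 < (1:ℝ)/k - δ := by linarith
        positivity)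
      have hr1 : (r : ℝ) < δ / 4 := lt_of_lt_of_le hrlt (min_le_left _ _)
      have hr2 : (r : ℝ) < (1/k - δ)/4 := lt_of_lt_of_le hrlt (min_le_right _ _)
      obtain ⟨q1, hq1s, hq1⟩ := Metric.mem_closure_iff.mp (hsd x) r (by exact_mod_cast hr0)
      obtain ⟨q2, hq2s, hq2⟩ := Metric.mem_closure_iff.mp (hsd y) r (by exact_mod_cast hr0)
      have hq12l : δ - 2 * r ≤ dist q1 q2 := by
        have h1 : δ ≤ dist x q1 + dist q1 q2 + dist q2 y := dist_triangle4 _ _ _ _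
        rw [dist_comm q2 y] at h1
        linarith
      have hq12u : dist q1 q2 ≤ δ + 2 * r := by
        have h1 : dist q1 q2 ≤ dist q1 x + dist x y + dist y q2 := dist_triangle4 _ _ _ _
        rw [dist_comm q1 x] at h1
        linarith
      have hA : ¬ countIn D (Metric.ball q1 (r : ℝ)) = 0 := by
        rw [countIn_eq_zero_iff]
        push_neg
        exact ⟨x, hxD, Metric.mem_ball.mpr hq1⟩
      have hB : ¬ countIn D (Metric.ball q2 (r : ℝ)) = 0 := by
        rw [countIn_eq_zero_iff]
        push_neg
        exact ⟨y, hyD, Metric.mem_ball.mpr hq2⟩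
      exact h q1 hq1s q2 hq2s r ⟨by exact_mod_cast hr0, by linarith, by linarith⟩ ⟨hA, hB⟩
  rw [key]
  exact (MeasurableSet.biUnion hsc fun x1 _ => MeasurableSet.biUnion hsc fun x2 _ =>
    MeasurableSet.iUnion fun r => MeasurableSet.iUnion fun _ =>
      ((hgen _ measurableSet_ball).compl.inter (hgen _ measurableSet_ball).compl)).compl
end

section
/- The MAX aggregator is measurable: the map from Multiset ℝ to the extended reals EReal sending a finite multiset D of real numbers to the supremum of its elements (i.e. (D.map Real.toEReal).sup, which is ⊥ for the empty multiset) is measurable with respect to the counting σ-algebra on Multiset ℝ (for the Borel σ-algebra on ℝ) and the Borel σ-algebra on EReal. -/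
theorem maxAggregator_measurable :
    @Measurable _ _ (countingMS ℝ) _
      (fun D : Multiset ℝ => (D.map Real.toEReal).sup) := by
  apply measurable_of_Ioi
  intro a
  have key : (fun D : Multiset ℝ => (D.map Real.toEReal).sup) ⁻¹' Set.Ioi a
      = {D : Multiset ℝ | countIn D {x : ℝ | a < (x : EReal)} = 0}ᶜ := by
    ext D
    simp only [Set.mem_preimage, Set.mem_Ioi, Set.mem_compl_iff, Set.mem_setOf_eq, countIn,
      Multiset.card_eq_zero, Multiset.filter_eq_nil, not_forall]
    constructor
    · intro h
      by_contra hc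
      push_neg at hc
      have : (D.map Real.toEReal).sup ≤ a := by
        apply Multiset.sup_le.mpr
        intro b hb
        obtain ⟨x, hx, rfl⟩ := Multiset.mem_map.1 hb
        exact hc x hx
      exact absurd h (not_lt.2 this)
    · rintro ⟨x, hx, hax⟩
      push_neg at hax
      exact lt_of_lt_of_le hax (Multiset.le_sup (Multiset.mem_map_of_mem _ hx))
  rw [key]
  apply MeasurableSet.compl
  apply MeasurableSpace.measurableSet_generateFrom
  exact ⟨{x : ℝ | a < (x : EReal)}, 0, measurable_coe_real_ereal measurableSet_Ioi, rfl⟩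
end

section
/- Assembling a view from measurable queries yields a measurable view: let X, Y₁ and Y₂ be standard Borel spaces and let Q₁ : Multiset X → Multiset Y₁ and Q₂ : Multiset X → Multiset Y₂ be measurable with respect to the counting σ-algebras. Then the view V : Multiset X → Multiset (Y₁ ⊕ Y₂) defined by V(D) = (Q₁ D).map Sum.inl + (Q₂ D).map Sum.inr is measurable with respect to the counting σ-algebra on Multiset X and the counting σ-algebra on Multiset (Y₁ ⊕ Y₂) (for the sum measurable structure on Y₁ ⊕ Y₂). -/
theorem view_assembled_from_measurable_queries_measurable
    {X Y₁ Y₂ : Type*} [MeasurableSpace X] [StandardBorelSpace X]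
    [MeasurableSpace Y₁] [StandardBorelSpace Y₁]
    [MeasurableSpace Y₂] [StandardBorelSpace Y₂]
    (Q₁ : Multiset X → Multiset Y₁) (Q₂ : Multiset X → Multiset Y₂)
    (hQ₁ : @Measurable _ _ (countingMS X) (countingMS Y₁) Q₁)
    (hQ₂ : @Measurable _ _ (countingMS X) (countingMS Y₂) Q₂) :
    @Measurable _ _ (countingMS X) (countingMS (Y₁ ⊕ Y₂))
      (fun D : Multiset X => (Q₁ D).map Sum.inl + (Q₂ D).map Sum.inr) := by
  classical
  letI : MeasurableSpace (Multiset X) := countingMS X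
  letI : MeasurableSpace (Multiset (Y₁ ⊕ Y₂)) := countingMS (Y₁ ⊕ Y₂)
  apply measurable_generateFrom
  rintro C ⟨E, n, hE, rfl⟩
  have hadd : ∀ D : Multiset X,
      countIn ((Q₁ D).map Sum.inl + (Q₂ D).map Sum.inr) E =
        countIn (Q₁ D) (Sum.inl ⁻¹' E) + countIn (Q₂ D) (Sum.inr ⁻¹' E) := by
    intro D
    simp [countIn, Multiset.filter_add, Multiset.filter_map, Set.preimage]
  have key : (fun D : Multiset X => (Q₁ D).map Sum.inl + (Q₂ D).map Sum.inr) ⁻¹'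
      {D | countIn D E = n} =
      ⋃ k ∈ Finset.range (n + 1),
        (Q₁ ⁻¹' {D | countIn D (Sum.inl ⁻¹' E) = k}) ∩
        (Q₂ ⁻¹' {D | countIn D (Sum.inr ⁻¹' E) = n - k}) := by
    ext D
    simp only [Set.mem_preimage, Set.mem_setOf_eq, hadd, Set.mem_iUnion, Set.mem_inter_iff,
      Finset.mem_range]
    constructor
    · rintro h
      exact ⟨countIn (Q₁ D) (Sum.inl ⁻¹' E), by omega, rfl, by omega⟩
    · rintro ⟨k, hk, h1, h2⟩
      omega
  rw [key]
  apply MeasurableSet.biUnion (Finset.range (n + 1)).countable_toSet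
  intro k _
  exact MeasurableSet.inter
    (hQ₁ (MeasurableSpace.measurableSet_generateFrom
      ⟨Sum.inl ⁻¹' E, k, ⟨hE.preimage measurable_inl, rfl⟩⟩))
    (hQ₂ (MeasurableSpace.measurableSet_generateFrom
      ⟨Sum.inr ⁻¹' E, n - k, ⟨hE.preimage measurable_inr, rfl⟩⟩))
end

section
/- There exists a non-measurable query: there is a Borel set B ⊆ ℝ × ℝ such that the map Q_B : Multiset ℝ → Multiset ℝ, defined by Q_B(D) = D if D is a singleton multiset {x} for some x ∈ ℝ with (x, y) ∈ B for some y ∈ ℝ, and Q_B(D) = the empty multiset otherwise, is not measurable with respect to the counting σ-algebra on Multiset ℝ (for the Borel σ-algebra on ℝ) on both domain and codomain. -/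
open Set TopologicalSpace MeasureTheory

instance : Uncountable (ℕ → ℕ) :=
  uncountable_iff_forall_not_surjective.2 fun f hf => by
    obtain ⟨m, hm⟩ := hf fun n => f n n + 1
    have := congrFun hm m
    omega

theorem MeasureTheory.AnalyticSet.exists_isClosed_image_fst {α : Type*} [TopologicalSpace α]
    [T2Space α] {s : Set α} (hs : AnalyticSet s) :
    ∃ F : Set (α × (ℕ → ℕ)), IsClosed F ∧ Prod.fst '' F = s := by
  rw [AnalyticSet] at hs
  rcases hs with rfl | ⟨f, hf, rfl⟩
  · exact ⟨∅, isClosed_empty, image_empty _⟩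
  · refine ⟨{p | p.1 = f p.2}, isClosed_eq continuous_fst (hf.comp continuous_snd), ?_⟩
    ext x
    simp [eq_comm]

section UniversalClosedSet

variable {Y : Type*} [TopologicalSpace Y] {b : ℕ → Set Y}

def universalClosedSet (b : ℕ → Set Y) : Set ((ℕ → ℕ) × Y) :=
  {p | ∀ n, p.1 n = 0 → p.2 ∉ b n}

theorem isClosed_universalClosedSet (hb : ∀ n, IsOpen (b n)) :
    IsClosed (universalClosedSet b) := by
  rw [universalClosedSet, ofPred_forall]
  exact isClosed_iInter fun n =>
    isClosed_imp (((continuous_apply n).comp continuous_fst).isOpen_preimage _ (isOpen_discrete {0}))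
      ((hb n).isClosed_compl.preimage continuous_snd)

theorem TopologicalSpace.IsTopologicalBasis.exists_section_universalClosedSet_eq
    (hb : IsTopologicalBasis (range b)) {F : Set Y} (hF : IsClosed F) :
    ∃ c : ℕ → ℕ, {y | (c, y) ∈ universalClosedSet b} = F := by
  classical
  refine ⟨fun n => if b n ⊆ Fᶜ then 0 else 1, Set.ext fun y => ⟨fun hy => ?_, fun hy n hn hyn => ?_⟩⟩
  · by_contra hyF
    obtain ⟨_, ⟨n, rfl⟩, hyn, hsub⟩ := hb.exists_subset_of_mem_open hyF hF.isOpen_compl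
    exact hy n (if_pos hsub) hyn
  · have hsub : b n ⊆ Fᶜ := by
      by_contra h
      simp [h] at hn
    exact hsub hyn hy

end UniversalClosedSet

theorem exists_isClosed_image_fst_not_measurableSet :
    ∃ C : Set ((ℕ → ℕ) × (ℕ → ℕ)), IsClosed C ∧ ¬ MeasurableSet (Prod.fst '' C) := by
  obtain ⟨b, hb⟩ := exists_seq_basis ((ℕ → ℕ) × (ℕ → ℕ))
  set U := universalClosedSet b
  have hU : IsClosed U := isClosed_universalClosedSet fun n => hb.isOpen (mem_range_self n)
  refine ⟨{p | (p.1, p) ∈ U}, hU.preimage (continuous_fst.prodMk continuous_id), fun hD => ?_⟩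
  obtain ⟨F, hF, hFD⟩ := hD.compl.analyticSet.exists_isClosed_image_fst
  obtain ⟨c, hc⟩ := hb.exists_section_universalClosedSet_eq hF
  have hdiag : c ∈ Prod.fst '' {p | (p.1, p) ∈ U} ↔ c ∈ (Prod.fst '' {p | (p.1, p) ∈ U})ᶜ := by
    rw [← hFD, ← hc]
    simp [U]
  exact iff_not_self hdiag

theorem exists_measurableSet_image_fst_not_measurableSet (X : Type*) [MeasurableSpace X]
    [StandardBorelSpace X] [Uncountable X] :
    ∃ B : Set (X × X), MeasurableSet B ∧ ¬ MeasurableSet (Prod.fst '' B) := by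
  obtain ⟨C, hC, hCfst⟩ := exists_isClosed_image_fst_not_measurableSet
  let e : (ℕ → ℕ) ≃ᵐ X := PolishSpace.measurableEquivOfNotCountable not_countable not_countable
  refine ⟨e.prodCongr e '' C, (e.prodCongr e).measurableSet_image.2 hC.measurableSet, ?_⟩
  have hfst : Prod.fst '' (e.prodCongr e '' C) = e '' (Prod.fst '' C) := by
    simp only [image_image]
    rfl
  rwa [hfst, e.measurableSet_image]

section CountingMS

variable {X Y : Type*}

theorem countIn_univ (D : Multiset X) : countIn D univ = D.card := by
  simp [countIn]

theorem countIn_singleton (x : X) (E : Set X) [Decidable (x ∈ E)] :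
    countIn {x} E = if x ∈ E then 1 else 0 := by
  by_cases hx : x ∈ E <;> simp [countIn, Multiset.filter_singleton, hx]

open Classical in
/-- The query `Q_B`. -/
noncomputable def projectionQuery (B : Set (X × Y)) (D : Multiset X) : Multiset X :=
  if ∃ x : X, D = {x} ∧ ∃ y : Y, (x, y) ∈ B then D else 0

theorem card_projectionQuery_singleton_eq_one_iff {B : Set (X × Y)} {x : X} :
    (projectionQuery B {x}).card = 1 ↔ x ∈ Prod.fst '' B := by
  by_cases hx : x ∈ Prod.fst '' B <;> simp_all [projectionQuery]

variable [MeasurableSpace X]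

theorem measurableSet_countIn_eq {E : Set X} (hE : MeasurableSet E) (n : ℕ) :
    MeasurableSet[countingMS X] {D | countIn D E = n} :=
  MeasurableSpace.measurableSet_generateFrom ⟨E, n, hE, rfl⟩

theorem measurable_singleton_countingMS :
    Measurable[_, countingMS X] fun x : X => ({x} : Multiset X) := by
  classical
  refine measurable_generateFrom ?_
  rintro _ ⟨E, n, hE, rfl⟩
  simp only [preimage_ofPred_eq, countIn_singleton]
  exact (measurable_const.ite hE measurable_const) (measurableSet_singleton n)

theorem measurableSet_image_fst_of_measurable_projectionQuery {B : Set (X × Y)}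
    (hQ : Measurable[countingMS X, countingMS X] (projectionQuery B)) :
    MeasurableSet (Prod.fst '' B) := by
  have hcard := (hQ.comp measurable_singleton_countingMS) (measurableSet_countIn_eq .univ 1)
  convert hcard using 1
  ext x
  simp [countIn_univ, card_projectionQuery_singleton_eq_one_iff]

end CountingMS

open Classical in
theorem exists_nonmeasurable_query :
    ∃ B : Set (ℝ × ℝ), MeasurableSet B ∧
      ¬ @Measurable _ _ (countingMS ℝ) (countingMS ℝ)
        (fun D : Multiset ℝ =>
          if ∃ x : ℝ, D = {x} ∧ ∃ y : ℝ, (x, y) ∈ B then D else 0) := by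
  obtain ⟨B, hB, hfst⟩ := exists_measurableSet_image_fst_not_measurableSet ℝ
  exact ⟨B, hB, fun hQ => hfst (measurableSet_image_fst_of_measurable_projectionQuery hQ)⟩
end
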